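/- Explicit formula for the infimal coercivity function: let Υ(u) := inf_{λ ∈ [0,1)} [ ((1 − λ)/2)·u² + H_λ(u + 1/2) + H_λ(1/2 − u) ] for u ≥ 0. Then Υ(u) = u²/2 for 0 ≤ u ≤ 4, while for u ≥ 4, setting λ*(u) := √(1 − (4u − 2)/(u² − 2)) ∈ [0,1), one has Υ(u) = (u²/2)(1 − λ*(u)) + (u − 1/2)·log( (1 + λ*(u))/(1 − λ*(u)) ) + λ*(u), and the infimum defining Υ(u) is attained at λ = λ*(u). -/

import Mathlib

/-!
For `0 ≤ λ ≤ 2u` the objective is `(1-λ)/2·u² + (2u-1)·artanh λ + λ`, and for `λ ≥ 2u` both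
entropies sit in their middle branch. Since `artanh` is convex on `[0,1)` with derivative
`1/(1-λ²)`, for `u ≥ 1/2` the objective is convex in `λ`, so its stationary point `λ*(u)`, the
root of `(1-λ²)(u²-2) = 4u-2`, is a minimizer; it lies in `[0,1)` exactly when `u ≥ 4`.
For `u ≤ 4` the tangent bounds `λ ≤ artanh λ ≤ λ/(1-λ²)` and `log(1+λ) ≤ 2(√(1+λ)-1)` show that
the objective never drops below its value `u²/2` at `λ = 0`.
-/

/-- The regularized entropy `H_λ` (for `λ ∈ [0,1)`). -/
noncomputable def Hlam (lam c : ℝ) : ℝ :=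
  if c ≤ (1 - lam) / 2 then c * Real.log ((1 - lam) / (1 + lam)) + lam
  else if c ≤ (1 + lam) / 2 then c * Real.log (2 * c / (1 + lam)) - c + (1 + lam) / 2
  else 0

/-- The infimal coercivity function
`Υ(u) = inf_{λ ∈ [0,1)} [ ((1-λ)/2) u² + H_λ(u + 1/2) + H_λ(1/2 - u) ]`. -/
noncomputable def Ups (u : ℝ) : ℝ :=
  ⨅ lam : Set.Ico (0:ℝ) 1,
    ((1 - (lam : ℝ)) / 2 * u ^ 2 + Hlam lam (u + 1/2) + Hlam lam (1/2 - u))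

open Real Set

theorem ConvexOn.add_mul_sub_le_of_hasDerivAt {S : Set ℝ} {f : ℝ → ℝ} {f' x y : ℝ}
    (hf : ConvexOn ℝ S f) (hx : x ∈ S) (hy : y ∈ S) (hf' : HasDerivAt f f' x) :
    f x + f' * (y - x) ≤ f y := by
  rcases lt_trichotomy x y with hxy | rfl | hyx
  · have h := hf.le_slope_of_hasDerivAt hx hy hxy hf'
    rw [slope_def_field, le_div_iff₀ (sub_pos.mpr hxy)] at h
    linarith
  · simp
  · have h := hf.slope_le_of_hasDerivAt hy hx hyx hf'
    rw [slope_def_field, div_le_iff₀ (sub_pos.mpr hyx)] at h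
    linarith

namespace Real

theorem log_div_eq_two_mul_artanh {x : ℝ} (hx : x ∈ Icc (-1) 1) :
    log ((1 + x) / (1 - x)) = 2 * artanh x := by
  rw [artanh_eq_half_log hx]
  ring

theorem hasDerivAt_artanh {x : ℝ} (hx : x ∈ Ioo (-1) 1) :
    HasDerivAt artanh (1 / (1 - x ^ 2)) x := by
  have h1 : (0 : ℝ) < 1 + x := by linarith [hx.1]
  have h2 : (0 : ℝ) < 1 - x := by linarith [hx.2]
  have hlog : HasDerivAt (fun y => (log (1 + y) - log (1 - y)) / 2) (1 / (1 - x ^ 2)) x := by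
    have h := ((((hasDerivAt_id x).const_add 1).log h1.ne').sub
      (((hasDerivAt_id x).const_sub 1).log h2.ne')).div_const 2
    refine h.congr_deriv ?_
    rw [id, show 1 - x ^ 2 = (1 + x) * (1 - x) by ring]
    field_simp
    ring
  refine hlog.congr_of_eventuallyEq ?_
  filter_upwards [isOpen_Ioo.mem_nhds hx] with y hy
  rw [artanh_eq_half_log (Ioo_subset_Icc_self hy),
    log_div (by linarith [hy.1]) (by linarith [hy.2])]
  ring

theorem convexOn_artanh : ConvexOn ℝ (Ico 0 1) artanh := by
  have hderiv : ∀ x ∈ Ico (0 : ℝ) 1, HasDerivAt artanh (1 / (1 - x ^ 2)) x :=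
    fun x hx => hasDerivAt_artanh ⟨by linarith [hx.1], hx.2⟩
  refine MonotoneOn.convexOn_of_deriv (convex_Ico 0 1)
    (fun x hx => (hderiv x hx).continuousAt.continuousWithinAt) ?_ ?_ <;> rw [interior_Ico]
  · exact fun x hx => (hderiv x (Ioo_subset_Ico_self hx)).differentiableAt.differentiableWithinAt
  · intro a ha b hb hab
    rw [(hderiv a (Ioo_subset_Ico_self ha)).deriv, (hderiv b (Ioo_subset_Ico_self hb)).deriv]
    have : 0 < 1 - b ^ 2 := by nlinarith [hb.1, hb.2]
    exact one_div_le_one_div_of_le this (by nlinarith [ha.1])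

theorem artanh_add_div_le {m x : ℝ} (hm : m ∈ Ico 0 1) (hx : x ∈ Ico 0 1) :
    artanh m + (x - m) / (1 - m ^ 2) ≤ artanh x := by
  have h := convexOn_artanh.add_mul_sub_le_of_hasDerivAt hm hx
    (hasDerivAt_artanh ⟨by linarith [hm.1], hm.2⟩)
  rwa [one_div_mul_eq_div] at h

theorem self_le_artanh {x : ℝ} (hx : x ∈ Ico 0 1) : x ≤ artanh x := by
  simpa using artanh_add_div_le ⟨le_rfl, one_pos⟩ hx

theorem artanh_mul_one_sub_sq_le {x : ℝ} (hx : x ∈ Ico 0 1) : artanh x * (1 - x ^ 2) ≤ x := by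
  have h := artanh_add_div_le hx ⟨le_rfl, one_pos⟩
  have hx2 : 0 < 1 - x ^ 2 := by nlinarith [hx.1, hx.2]
  rw [artanh_zero, zero_sub, neg_div, ← sub_eq_add_neg, sub_nonpos, le_div_iff₀ hx2] at h
  exact h

theorem sq_le_mul_sub_log_one_add {x : ℝ} (hx : 0 ≤ x) :
    x ^ 2 ≤ 2 * (2 + x) * (x - log (1 + x)) := by
  set s := √(1 + x)
  have hs : s ^ 2 = 1 + x := sq_sqrt (by linarith)
  have hs0 : 0 < s := sqrt_pos.mpr (by linarith)
  have hlog : log (1 + x) ≤ 2 * (s - 1) := by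
    rw [← hs, log_pow]
    push_cast
    linarith [log_le_sub_one_of_pos hs0]
  have hsq : x ^ 2 = (s - 1) ^ 2 * (s + 1) ^ 2 := by rw [← mul_pow]; nlinarith
  nlinarith [sq_nonneg (s - 1), mul_nonneg (sq_nonneg (s - 1)) (sq_nonneg (s - 1))]

end Real

section Hlam

variable {lam c : ℝ}

theorem Hlam_of_le (hc : c ≤ (1 - lam) / 2) :
    Hlam lam c = c * log ((1 - lam) / (1 + lam)) + lam :=
  if_pos hc

theorem Hlam_of_mem_Icc (hc : c ∈ Icc ((1 - lam) / 2) ((1 + lam) / 2)) :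
    Hlam lam c = c * log (2 * c / (1 + lam)) - c + (1 + lam) / 2 := by
  rw [Hlam]
  split_ifs with h h'
  · rw [show 2 * c = 1 - lam by linarith [hc.1]]
    linarith [hc.1]
  · rfl
  · exact absurd hc.2 h'

theorem Hlam_of_ge (hlam : 0 ≤ lam) (hc : (1 + lam) / 2 ≤ c) : Hlam lam c = 0 := by
  rcases eq_or_lt_of_le hc with hc | hc
  · rw [Hlam_of_mem_Icc ⟨by linarith, hc.ge⟩, ← hc,
      mul_div_cancel₀ _ two_ne_zero, div_self (by linarith)]
    simp
  · rw [Hlam, if_neg (by linarith), if_neg (by linarith)]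

theorem Hlam_zero (c : ℝ) : Hlam 0 c = 0 := by
  rcases le_total c (1 / 2) with hc | hc
  · rw [Hlam_of_le (by linarith)]
    simp
  · exact Hlam_of_ge le_rfl (by linarith)

end Hlam

noncomputable def upsObjective (u lam : ℝ) : ℝ :=
  (1 - lam) / 2 * u ^ 2 + Hlam lam (u + 1/2) + Hlam lam (1/2 - u)

section upsObjective

variable {u lam : ℝ}

theorem upsObjective_zero (u : ℝ) : upsObjective u 0 = u ^ 2 / 2 := by
  simp only [upsObjective, Hlam_zero]
  ring

theorem upsObjective_of_le_two_mul (hlam : lam ∈ Ico 0 1) (h : lam ≤ 2 * u) :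
    upsObjective u lam = (1 - lam) / 2 * u ^ 2 + (u - 1/2) * log ((1 + lam) / (1 - lam)) + lam := by
  rw [upsObjective, Hlam_of_ge hlam.1 (by linarith), Hlam_of_le (by linarith),
    ← inv_div (1 + lam), log_inv]
  ring

theorem upsObjective_eq_artanh (hlam : lam ∈ Ico 0 1) (h : lam ≤ 2 * u) :
    upsObjective u lam = (1 - lam) / 2 * u ^ 2 + (2 * u - 1) * artanh lam + lam := by
  rw [upsObjective_of_le_two_mul hlam h,
    log_div_eq_two_mul_artanh ⟨by linarith [hlam.1], hlam.2.le⟩]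
  ring

theorem upsObjective_of_two_mul_le (hu : 0 ≤ u) (hlam : lam < 1) (h : 2 * u ≤ lam) :
    upsObjective u lam = (1 - lam) / 2 * u ^ 2
      + ((1 + 2 * u) * log (1 + 2 * u) + (1 - 2 * u) * log (1 - 2 * u)) / 2
      + (lam - log (1 + lam)) := by
  rw [upsObjective, Hlam_of_mem_Icc ⟨by linarith, by linarith⟩,
    Hlam_of_mem_Icc ⟨by linarith, by linarith⟩,
    log_div (by linarith) (by linarith), log_div (by linarith) (by linarith)]
  ring_nf

theorem sq_div_two_le_upsObjective_of_half_le (hu : 1/2 ≤ u) (hu4 : u ≤ 4)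
    (hlam : lam ∈ Ico 0 1) : u ^ 2 / 2 ≤ upsObjective u lam := by
  rw [upsObjective_eq_artanh hlam (by linarith [hlam.2])]
  nlinarith [mul_le_mul_of_nonneg_left (self_le_artanh hlam) (by linarith : 0 ≤ 2 * u - 1),
    mul_nonneg (mul_nonneg hlam.1 (by linarith : 0 ≤ u)) (by linarith : 0 ≤ 4 - u)]

theorem sq_div_two_le_upsObjective_of_le_two_mul (hu0 : 0 ≤ u) (hu : u < 1/2)
    (hlam : lam ∈ Ico 0 1) (h : lam ≤ 2 * u) : u ^ 2 / 2 ≤ upsObjective u lam := by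
  rw [upsObjective_eq_artanh hlam h]
  have hsq : (1 - 2 * u) * (1 + 2 * u) ≤ 1 - lam ^ 2 := by nlinarith [hlam.1]
  have hartanh : (1 - 2 * u) * artanh lam * (1 + 2 * u) ≤ lam := by
    nlinarith [artanh_mul_one_sub_sq_le hlam,
      mul_le_mul_of_nonneg_left hsq (artanh_nonneg hlam.1)]
  have hpoly : lam ≤ lam * (1 - u ^ 2 / 2) * (1 + 2 * u) := by
    nlinarith [mul_nonneg hlam.1 (mul_nonneg hu0 (by nlinarith : 0 ≤ 2 - u / 2 - u ^ 2))]
  nlinarith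

theorem sq_div_two_le_upsObjective_of_two_mul_le (hu : 0 ≤ u) (hlam : lam < 1)
    (h : 2 * u ≤ lam) : u ^ 2 / 2 ≤ upsObjective u lam := by
  rw [upsObjective_of_two_mul_le hu hlam h]
  have hplus := self_sub_one_le_mul_log (by linarith : (0 : ℝ) ≤ 1 + 2 * u)
  have hminus := self_sub_one_le_mul_log (by linarith : (0 : ℝ) ≤ 1 - 2 * u)
  -- `λ - log (1 + λ) ≥ λ² / (2 (2 + λ)) ≥ λ u² / 2`, as `λ ≥ 2u ≥ 3u²`
  have hgap := sq_le_mul_sub_log_one_add (by linarith : 0 ≤ lam)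
  have hlog := log_le_sub_one_of_pos (by linarith : 0 < 1 + lam)
  nlinarith [mul_nonneg hu (by linarith : 0 ≤ lam - 2 * u)]

theorem isMinOn_upsObjective_zero (hu0 : 0 ≤ u) (hu4 : u ≤ 4) :
    IsMinOn (upsObjective u) (Ico 0 1) 0 := by
  refine isMinOn_iff.mpr fun lam hlam => ?_
  rw [upsObjective_zero]
  rcases le_or_gt (1/2) u with hu | hu
  · exact sq_div_two_le_upsObjective_of_half_le hu hu4 hlam
  rcases le_total lam (2 * u) with h | h
  · exact sq_div_two_le_upsObjective_of_le_two_mul hu0 hu hlam h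
  · exact sq_div_two_le_upsObjective_of_two_mul_le hu0 hlam.2 h

/-- For `u ≥ 1/2` the objective is convex in `λ`, and `hstat` says that its derivative
`-u²/2 + (2u-1)/(1-λ²) + 1` vanishes at `s`. -/
theorem isMinOn_upsObjective_of_stationary {s : ℝ} (hu : 1/2 ≤ u) (hs : s ∈ Ico 0 1)
    (hstat : (u ^ 2 / 2 - 1) * (1 - s ^ 2) = 2 * u - 1) :
    IsMinOn (upsObjective u) (Ico 0 1) s := by
  refine isMinOn_iff.mpr fun lam hlam => ?_
  rw [upsObjective_eq_artanh hs (by linarith [hs.2]),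
    upsObjective_eq_artanh hlam (by linarith [hlam.2])]
  have hs2 : 1 - s ^ 2 ≠ 0 := by nlinarith [hs.1, hs.2]
  have htangent := mul_le_mul_of_nonneg_left (artanh_add_div_le hs hlam)
    (by linarith : 0 ≤ 2 * u - 1)
  have hslope : (2 * u - 1) * ((lam - s) / (1 - s ^ 2)) = (u ^ 2 / 2 - 1) * (lam - s) := by
    rw [← hstat]
    field_simp
  rw [mul_add, hslope] at htangent
  linarith

end upsObjective

theorem Ups_eq_of_isMinOn {u s : ℝ} (hs : s ∈ Ico 0 1)
    (hmin : IsMinOn (upsObjective u) (Ico 0 1) s) : Ups u = upsObjective u s :=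
  IsLeast.csInf_eq ⟨⟨⟨s, hs⟩, rfl⟩, by rintro _ ⟨⟨lam, hlam⟩, rfl⟩; exact hmin hlam⟩

noncomputable def lamStar (u : ℝ) : ℝ :=
  √(1 - (4 * u - 2) / (u ^ 2 - 2))

section lamStar

variable {u : ℝ}

theorem one_sub_lamStar_sq (hu : 4 ≤ u) : 1 - lamStar u ^ 2 = (4 * u - 2) / (u ^ 2 - 2) := by
  have hu2 : 0 < u ^ 2 - 2 := by nlinarith
  rw [lamStar, sq_sqrt (sub_nonneg.mpr ((div_le_one hu2).mpr (by nlinarith)))]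
  ring

theorem lamStar_mem_Ico (hu : 4 ≤ u) : lamStar u ∈ Ico 0 1 := by
  have hpos : 0 < (4 * u - 2) / (u ^ 2 - 2) := div_pos (by linarith) (by nlinarith)
  refine ⟨sqrt_nonneg _, ?_⟩
  have h := one_sub_lamStar_sq hu
  nlinarith [sqrt_nonneg (1 - (4 * u - 2) / (u ^ 2 - 2))]

theorem lamStar_stationary (hu : 4 ≤ u) : (u ^ 2 / 2 - 1) * (1 - lamStar u ^ 2) = 2 * u - 1 := by
  have hu2 : u ^ 2 - 2 ≠ 0 := by nlinarith
  rw [one_sub_lamStar_sq hu]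
  field_simp
  ring

end lamStar

/-- Explicit formula for the infimal coercivity function: `Υ(u) = u²/2` for
`0 ≤ u ≤ 4`, and for `u ≥ 4` the infimum is attained at
`λ*(u) = √(1 - (4u-2)/(u²-2)) ∈ [0,1)` with the explicit value stated below. -/
theorem Ups_explicit_formula (u : ℝ) :
    (0 ≤ u → u ≤ 4 → Ups u = u ^ 2 / 2) ∧
    (4 ≤ u →
      Real.sqrt (1 - (4 * u - 2) / (u ^ 2 - 2)) ∈ Set.Ico (0:ℝ) 1 ∧
      Ups u = u ^ 2 / 2 * (1 - Real.sqrt (1 - (4 * u - 2) / (u ^ 2 - 2)))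
          + (u - 1/2) * Real.log ((1 + Real.sqrt (1 - (4 * u - 2) / (u ^ 2 - 2)))
              / (1 - Real.sqrt (1 - (4 * u - 2) / (u ^ 2 - 2))))
          + Real.sqrt (1 - (4 * u - 2) / (u ^ 2 - 2)) ∧
      Ups u = (1 - Real.sqrt (1 - (4 * u - 2) / (u ^ 2 - 2))) / 2 * u ^ 2
          + Hlam (Real.sqrt (1 - (4 * u - 2) / (u ^ 2 - 2))) (u + 1/2)
          + Hlam (Real.sqrt (1 - (4 * u - 2) / (u ^ 2 - 2))) (1/2 - u)) := by
  refine ⟨fun hu0 hu4 => ?_, fun hu4 => ?_⟩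
  · rw [Ups_eq_of_isMinOn ⟨le_rfl, one_pos⟩ (isMinOn_upsObjective_zero hu0 hu4), upsObjective_zero]
  · have hmem := lamStar_mem_Ico hu4
    have hUps : Ups u = upsObjective u (lamStar u) := Ups_eq_of_isMinOn hmem
      (isMinOn_upsObjective_of_stationary (by linarith) hmem (lamStar_stationary hu4))
    refine ⟨hmem, ?_, hUps⟩
    rw [hUps, upsObjective_of_le_two_mul hmem (by linarith [hmem.2]), lamStar]
    ring
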